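/- arXiv:1412.8733 — 8 statements merged into one kernel-verified Lean document; each statement's English description precedes it below -/
import Mathlib

section
/- Let K be a field of characteristic p > 0, and let δ : K[x] → K[x] be the K-linear map F(x) ↦ F(x+1) - F(x), and N : K[x] → K[x] be the K-linear map F(x) ↦ F(x) + F(x+1) + ... + F(x+p-1). Then the image of δ equals the kernel of N. -/
/-!
Translation `σ : F ↦ F(x + 1)` is a ring automorphism of `K[x]` with `σ^p = 1`, and `N` is the
trace `∑_{i<p} σ^i`. Additive Hilbert 90 holds for any ring endomorphism `σ` with `σ^n = 1` as soon
as some `θ` has trace `1`: if `b` has trace zero, then `b = σ a - a` for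
`a = -∑_{i<n} (b + σ b + ⋯ + σ^{i-1} b) σ^i θ`. For translation one may take `θ = -x^(p-1)`:
expanding `∑_{k<p} (x + k)^(p-1)` leaves only the power sums `∑_{k<p} k^j`, which vanish mod `p`
for `j < p - 1` and equal `-1` for `j = p - 1`.
-/

open Polynomial Finset

theorem sum_range_comp_succ_eq_of_apply_eq {M : Type*} [AddCommGroup M] (f : ℕ → M) {n : ℕ}
    (h : f n = f 0) : ∑ i ∈ range n, f (i + 1) = ∑ i ∈ range n, f i := by
  have := sum_range_succ' f n
  rw [sum_range_succ, h] at this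
  exact (add_right_cancel this).symm

section IterateSum

variable {A F : Type*} [FunLike F A A]

theorem sum_range_iterate_apply_sub_self [AddCommGroup A] [AddMonoidHomClass F A A] (σ : F)
    (n : ℕ) (a : A) : ∑ i ∈ range n, σ^[i] (σ a - a) = σ^[n] a - a := by
  simp_rw [iterate_map_sub, ← Function.iterate_succ_apply]
  exact sum_range_sub (fun i => σ^[i] a) n

theorem exists_apply_sub_self_eq_of_sum_iterate_eq_zero [Ring A] [RingHomClass F A A] (σ : F)
    {n : ℕ} (hσ : ∀ a, σ^[n] a = a) {θ : A} (hθ : ∑ i ∈ range n, σ^[i] θ = 1) {b : A}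
    (hb : ∑ i ∈ range n, σ^[i] b = 0) : ∃ a, σ a - a = b := by
  set S : ℕ → A := fun i => ∑ j ∈ range i, σ^[j] b
  have hσS : ∀ i, σ (S i) = S (i + 1) - b := fun i => by
    simp [S, map_sum, sum_range_succ', ← Function.iterate_succ_apply' σ]
  have hθ' : ∑ i ∈ range n, σ^[i + 1] θ = 1 :=
    (sum_range_comp_succ_eq_of_apply_eq (fun i => σ^[i] θ) (hσ θ)).trans hθ
  have hS : ∑ i ∈ range n, S (i + 1) * σ^[i + 1] θ = ∑ i ∈ range n, S i * σ^[i] θ :=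
    sum_range_comp_succ_eq_of_apply_eq (fun i => S i * σ^[i] θ) (by simp [S, hb])
  refine ⟨-∑ i ∈ range n, S i * σ^[i] θ, ?_⟩
  calc σ (-∑ i ∈ range n, S i * σ^[i] θ) - -∑ i ∈ range n, S i * σ^[i] θ
      = ∑ i ∈ range n, S i * σ^[i] θ - ∑ i ∈ range n, (S (i + 1) - b) * σ^[i + 1] θ := by
        simp only [map_neg, map_sum, map_mul, hσS, Function.iterate_succ_apply']
        abel
    _ = b * ∑ i ∈ range n, σ^[i + 1] θ := by
        simp only [sub_mul, sum_sub_distrib, hS, mul_sum]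
        abel
    _ = b := by rw [hθ', mul_one]

theorem exists_apply_sub_self_eq_iff_sum_iterate_eq_zero [Ring A] [RingHomClass F A A] (σ : F)
    {n : ℕ} (hσ : ∀ a, σ^[n] a = a) {θ : A} (hθ : ∑ i ∈ range n, σ^[i] θ = 1) (b : A) :
    (∃ a, σ a - a = b) ↔ ∑ i ∈ range n, σ^[i] b = 0 := by
  refine ⟨?_, exists_apply_sub_self_eq_of_sum_iterate_eq_zero σ hσ hθ⟩
  rintro ⟨a, rfl⟩
  rw [sum_range_iterate_apply_sub_self, hσ, sub_self]

end IterateSum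

theorem ZMod.sum_range_natCast {M : Type*} [AddCommMonoid M] (p : ℕ) [NeZero p]
    (f : ZMod p → M) : ∑ k ∈ range p, f k = ∑ x : ZMod p, f x :=
  sum_nbij' Nat.cast ZMod.val (by simp) (fun x _ => mem_range.2 x.val_lt)
    (fun _ hk => ZMod.val_cast_of_lt (mem_range.1 hk)) (fun x _ => ZMod.natCast_zmod_val x)
    (fun _ _ => rfl)

namespace Polynomial

theorem taylor_one_iterate {R : Type*} [CommSemiring R] (k : ℕ) (f : R[X]) :
    (taylor (1 : R))^[k] f = taylor (k : R) f := by
  induction k with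
  | zero => simp
  | succ k ih => rw [Function.iterate_succ_apply', ih, taylor_taylor, Nat.cast_succ, add_comm]

theorem taylor_one_iterate_charP {R : Type*} [CommSemiring R] (p : ℕ) [CharP R p] (f : R[X]) :
    (taylor (1 : R))^[p] f = f := by
  rw [taylor_one_iterate, CharP.cast_eq_zero, taylor_zero]

end Polynomial

section PowerSums

variable (R : Type*) [CommRing R] (p : ℕ) [Fact p.Prime] [CharP R p]

theorem sum_range_natCast_pow_of_lt {j : ℕ} (hj : j < p - 1) :
    ∑ k ∈ range p, (k : R) ^ j = 0 := by
  have h := FiniteField.sum_pow_lt_card_sub_one (ZMod p) j (by rwa [ZMod.card])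
  rw [← ZMod.sum_range_natCast] at h
  simpa using congrArg (ZMod.castHom (dvd_refl p) R) h

theorem sum_range_natCast_pow_sub_one : ∑ k ∈ range p, (k : R) ^ (p - 1) = -1 := by
  have hp := (Fact.out : p.Prime).one_lt
  obtain ⟨n, rfl⟩ : ∃ n, p = n + 1 := ⟨p - 1, by omega⟩
  rw [sum_range_succ', Nat.add_sub_cancel, Nat.cast_zero, zero_pow (by omega), add_zero]
  have hfermat : ∀ k ∈ range n, ((k + 1 : ℕ) : R) ^ n = 1 := fun k hk => by
    have hk0 : ((k + 1 : ℕ) : ZMod (n + 1)) ≠ 0 := by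
      rw [Ne, ZMod.natCast_eq_zero_iff]
      exact Nat.not_dvd_of_pos_of_lt (by omega) (by simp at hk; omega)
    simpa using congrArg (ZMod.castHom (dvd_refl _) R) (ZMod.pow_card_sub_one_eq_one hk0)
  rw [sum_congr rfl hfermat, sum_const, card_range, nsmul_one]
  have := CharP.cast_eq_zero R (n + 1)
  push_cast at this
  linear_combination this

theorem Polynomial.sum_range_taylor_X_pow_sub_one :
    ∑ k ∈ range p, taylor (k : R) (X ^ (p - 1)) = -1 := by
  have hp := (Fact.out : p.Prime).one_lt
  simp_rw [taylor_X_pow, add_pow, Nat.sub_add_cancel hp.le]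
  rw [sum_comm, sum_eq_single 0]
  · simp [sum_range_natCast_pow_sub_one]
  · intro b hb hb0
    simp [← mul_sum, ← sum_mul,
      sum_range_natCast_pow_of_lt R[X] p (show p - 1 - b < p - 1 by simp at hb; omega)]
  · exact fun h => absurd (mem_range.2 (by omega)) h

end PowerSums

theorem stmt_0 (K : Type*) [Field K] (p : ℕ) (hp : 0 < p) (hchar : CharP K p)
    (G : Polynomial K) :
    (∃ F : Polynomial K, F.comp (X + 1) - F = G) ↔
      (∑ k ∈ Finset.range p, G.comp (X + C (k : K))) = 0 := by
  have : NeZero p := ⟨hp.ne'⟩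
  have : Fact p.Prime := CharP.char_is_prime_of_pos K p
  have hσ : ⇑(taylorAlgHom (1 : K)) = taylor 1 := rfl
  have hθ : ∑ k ∈ range p, (taylorAlgHom (1 : K))^[k] (-X ^ (p - 1)) = 1 := by
    simp only [hσ, taylor_one_iterate, map_neg, sum_neg_distrib, sum_range_taylor_X_pow_sub_one,
      neg_neg]
  have key := exists_apply_sub_self_eq_iff_sum_iterate_eq_zero (taylorAlgHom (1 : K))
    (by simpa [hσ] using taylor_one_iterate_charP p) hθ G
  simpa [hσ, taylor_one_iterate, taylor_apply] using key
end

section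
/- Let K be a field of characteristic p > 0, let V ⊆ K[x] be the K-subspace of polynomials of the form x^{p-1} P(x^p) for P ∈ K[x], and let N : K[x] → K[x] be F(x) ↦ Σ_{k=0}^{p-1} F(x+k). Then V ∩ Ker(N) = {0}. -/
/-!
Write `F = X ^ (p - 1) * P(X ^ p)`. Then `F(X + k) = Q_k * (X + k) ^ (p - 1)` with
`Q_k = P((X + k) ^ p)` a constant for the derivative. Differentiating `∑ₖ F(X + k) = 0` repeatedly
(the factors `p - 1, p - 2, …` are units in `K`) gives `∑ₖ Q_k * (X + k) ^ m = 0` for every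
`m < p`. The `X + k`, `k < p`, are distinct, so the Vandermonde matrix is invertible over the
domain `K[X]` and all `Q_k` vanish; `Q_0 = P(X ^ p) = 0` forces `P = 0`.
-/

open Polynomial

namespace Polynomial

variable {R : Type*} [CommRing R]

theorem derivative_comp_pow_eq_zero (p : ℕ) [CharP R p] (P g : R[X]) :
    derivative (P.comp (g ^ p)) = 0 := by
  simp [derivative_comp, derivative_pow]

theorem iterate_derivative_mul_of_derivative_eq_zero {q : R[X]} (hq : derivative q = 0)
    (f : R[X]) (n : ℕ) : derivative^[n] (f * q) = derivative^[n] f * q := by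
  induction n with
  | zero => rfl
  | succ n ih =>
    rw [Function.iterate_succ_apply', ih, derivative_mul, hq, mul_zero, add_zero,
      Function.iterate_succ_apply']

theorem sum_mul_X_add_C_pow_eq_zero_of_le [IsDomain R] {ι : Type*} (s : Finset ι)
    (c : ι → R) {q : ι → R[X]} (hq : ∀ i, derivative (q i) = 0) {m n : ℕ}
    (hn : (n.factorial : R) ≠ 0) (hmn : m ≤ n)
    (h : ∑ i ∈ s, q i * (X + C (c i)) ^ n = 0) :
    ∑ i ∈ s, q i * (X + C (c i)) ^ m = 0 := by
  have hd : (n.descFactorial (n - m) : R) ≠ 0 := by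
    have hfac : m.factorial * n.descFactorial (n - m) = n.factorial := by
      simpa only [Nat.sub_sub_self hmn] using Nat.factorial_mul_descFactorial (Nat.sub_le n m)
    exact right_ne_zero_of_mul (by rwa [← Nat.cast_mul, hfac])
  have hder := congrArg (derivative^[n - m]) h
  simp only [iterate_derivative_sum, iterate_map_zero, mul_comm (q _),
    iterate_derivative_mul_of_derivative_eq_zero (hq _), iterate_derivative_X_add_pow,
    Nat.sub_sub_self hmn, smul_mul_assoc, ← Finset.smul_sum] at hder
  rw [nsmul_eq_mul, ← C_eq_natCast, mul_eq_zero, C_eq_zero] at hder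
  simpa only [mul_comm (q _)] using hder.resolve_left hd

end Polynomial

theorem stmt_1 (K : Type*) [Field K] (p : ℕ) (hp : 0 < p) (hchar : CharP K p)
    (F : Polynomial K)
    (hV : ∃ P : Polynomial K, F = X ^ (p - 1) * P.comp (X ^ p))
    (hN : (∑ k ∈ Finset.range p, F.comp (X + C (k : K))) = 0) :
    F = 0 := by
  obtain ⟨P, rfl⟩ := hV
  have : NeZero p := ⟨hp.ne'⟩
  have hprime := (CharP.char_is_prime_of_pos K p).out
  set Q : Fin p → K[X] := fun k => P.comp ((X + C ((k : ℕ) : K)) ^ p)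
  have hQ : ∀ k, derivative (Q k) = 0 := fun k => derivative_comp_pow_eq_zero p _ _
  have hfact : ((p - 1).factorial : K) ≠ 0 := by
    rw [Ne, CharP.cast_eq_zero_iff K p, hprime.dvd_factorial]
    omega
  have hmoments : ∀ m : Fin p, ∑ k, Q k * (X + C ((k : ℕ) : K)) ^ (m : ℕ) = 0 := by
    intro m
    refine sum_mul_X_add_C_pow_eq_zero_of_le _ _ hQ hfact (by omega) ?_
    rw [Finset.sum_range] at hN
    simpa only [mul_comp, X_pow_comp, comp_assoc, mul_comm] using hN
  have hinj : Function.Injective fun k : Fin p => X + C ((k : ℕ) : K) := fun i j hij =>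
    Fin.ext <| CharP.natCast_injOn_Iio K p i.isLt j.isLt <| C_injective <| add_left_cancel hij
  have hQ0 := congrFun (Matrix.eq_zero_of_forall_pow_sum_mul_pow_eq_zero hinj hmoments) ⟨0, hp⟩
  simp only [Q, Nat.cast_zero, C_0, add_zero, Pi.zero_apply, ← expand_eq_comp_X_pow,
    expand_eq_zero hp] at hQ0
  rw [hQ0, zero_comp, mul_zero]
end

section
/- Let K be a field of characteristic p > 0, let V = {x^{p-1} P(x^p) : P ∈ K[x]} ⊆ K[x], and let δ : K[x] → K[x] be F(x) ↦ F(x+1) - F(x). Then K[x] = V ⊕ Im(δ), i.e., every polynomial in K[x] can be written uniquely as the sum of an element of V and an element of the image of δ. -/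
/-!
In the falling-factorial basis `(x)ₙ = descPochhammer K n` the difference operator acts as the
weighted shift `δ (x)ₙ = n • (x)ₙ₋₁`, and `δ` lowers degrees. Peeling off leading falling factorials
of `H` whose degree vanishes in `K` (they are killed by `δ`) shows that a nonzero `δ H` has a degree
`d` with `d + 1 ≠ 0` in `K`, whereas a nonzero element of `V` has degree `≡ -1 (mod p)`; so
`V ∩ Im δ = 0`. Conversely `Xⁿ ∈ V` when `p ∣ n + 1`, and otherwise `(x)ₙ = δ ((n + 1)⁻¹ • (x)ₙ₊₁)`,
so `V + Im δ` contains a monic polynomial of every degree and is everything.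
-/

open Polynomial

namespace Polynomial

section CommRing

variable {R : Type*} [CommRing R]

noncomputable def fwdDifference (R : Type*) [CommRing R] : R[X] →ₗ[R] R[X] :=
  taylor 1 - LinearMap.id

theorem fwdDifference_apply (H : R[X]) : fwdDifference R H = H.comp (X + 1) - H := by
  simp [fwdDifference, taylor_apply]

theorem mem_range_fwdDifference {D : R[X]} :
    D ∈ LinearMap.range (fwdDifference R) ↔ ∃ H : R[X], D = H.comp (X + 1) - H := by
  simp [fwdDifference_apply, eq_comm]

theorem degree_fwdDifference_lt {H : R[X]} (hH : H ≠ 0) :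
    (fwdDifference R H).degree < H.degree := by
  simpa [fwdDifference, degree_taylor] using degree_sub_lt_left (degree_taylor H 1)
    ((taylor_eq_zero 1 H).not.mpr hH) (leadingCoeff_taylor 1 H)

theorem fwdDifference_descPochhammer (n : ℕ) :
    fwdDifference R (descPochhammer R n) = (n : R) • descPochhammer R (n - 1) := by
  cases n with
  | zero => simp [fwdDifference_apply]
  | succ n =>
    rw [fwdDifference_apply]
    nth_rw 1 [descPochhammer_succ_left]
    rw [descPochhammer_succ_right, mul_comp, comp_assoc]
    simp [smul_eq_C_mul]
    ring

theorem degree_sub_leadingCoeff_smul_lt {f q : R[X]} (hf : f ≠ 0) (hq : q.Monic)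
    (hdeg : q.natDegree = f.natDegree) : (f - f.leadingCoeff • q).degree < f.degree := by
  have : Nontrivial R := nontrivial_of_ne _ 0 (leadingCoeff_ne_zero.mpr hf)
  have hlc : (f.leadingCoeff • q).leadingCoeff = f.leadingCoeff := by
    rw [smul_eq_C_mul, leadingCoeff_mul_monic hq, leadingCoeff_C]
  have hlc0 : (C f.leadingCoeff).leadingCoeff * q.leadingCoeff ≠ 0 := by
    simpa [hq.leadingCoeff] using hf
  refine degree_sub_lt_left ?_ hf hlc.symm
  rw [smul_eq_C_mul, degree_mul' hlc0, degree_C (by simpa using hf), zero_add,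
    degree_eq_natDegree hf, degree_eq_natDegree hq.ne_zero, hdeg]

variable [IsDomain R]

theorem natDegree_fwdDifference {H : R[X]} (hH : (H.natDegree : R) ≠ 0) :
    (fwdDifference R H).natDegree = H.natDegree - 1 := by
  have hH0 : H ≠ 0 := by rintro rfl; simp at hH
  have hd0 : H.natDegree ≠ 0 := by rintro h; simp [h] at hH
  obtain ⟨e, hd⟩ := Nat.exists_eq_add_one_of_ne_zero hd0
  set c := H.leadingCoeff
  set H' := H - c • descPochhammer R H.natDegree
  have hH'lt : H'.degree < H.degree :=
    degree_sub_leadingCoeff_smul_lt hH0 (monic_descPochhammer R _) (descPochhammer_natDegree R _)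
  have hsplit : fwdDifference R H = fwdDifference R H' + (c * (e + 1 : ℕ)) • descPochhammer R e := by
    simp [H', fwdDifference_descPochhammer, hd, smul_smul]
  have hc : c * ((e + 1 : ℕ) : R) ≠ 0 := mul_ne_zero (leadingCoeff_ne_zero.mpr hH0) (hd ▸ hH)
  have hlow : (fwdDifference R H').degree < e := by
    rcases eq_or_ne H' 0 with h0 | h0
    · simp [h0]
    rw [degree_eq_natDegree hH0, hd] at hH'lt
    exact (degree_fwdDifference_lt h0).trans_le (Order.le_of_lt_succ hH'lt)
  rw [← descPochhammer_natDegree R e, ← natDegree_smul _ hc,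
    ← degree_eq_natDegree (smul_ne_zero hc (monic_descPochhammer R e).ne_zero)] at hlow
  rw [hsplit, natDegree_add_eq_right_of_degree_lt hlow, natDegree_smul _ hc,
    descPochhammer_natDegree, hd, Nat.add_sub_cancel]

theorem natCast_natDegree_fwdDifference_add_one_ne_zero {H : R[X]}
    (hH : fwdDifference R H ≠ 0) : (((fwdDifference R H).natDegree + 1 : ℕ) : R) ≠ 0 := by
  induction H using degree_lt_wf.induction with
  | _ H ih =>
  have hH0 : H ≠ 0 := by rintro rfl; simp at hH
  by_cases hd : (H.natDegree : R) = 0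
  · set H' := H - H.leadingCoeff • descPochhammer R H.natDegree
    have hH'lt : H'.degree < H.degree := degree_sub_leadingCoeff_smul_lt hH0
      (monic_descPochhammer R _) (descPochhammer_natDegree R _)
    have hsplit : fwdDifference R H = fwdDifference R H' := by
      simp [H', fwdDifference_descPochhammer, hd]
    exact hsplit ▸ ih H' hH'lt (hsplit ▸ hH)
  have hd0 : H.natDegree ≠ 0 := by rintro h; simp [h] at hd
  rwa [natDegree_fwdDifference hd, Nat.sub_add_cancel (Nat.one_le_iff_ne_zero.mpr hd0)]

end CommRing

/-- The space `V = {X ^ (p - 1) * P (X ^ p)}`. -/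
noncomputable def xPowPredMulExpand (R : Type*) [CommSemiring R] (p : ℕ) : Submodule R R[X] :=
  LinearMap.range (LinearMap.mulLeft R (X ^ (p - 1) : R[X]) ∘ₗ (expand R p).toLinearMap)

section CommSemiring

variable {R : Type*} [CommSemiring R] {p : ℕ}

theorem mem_xPowPredMulExpand {f : R[X]} :
    f ∈ xPowPredMulExpand R p ↔ ∃ P : R[X], f = X ^ (p - 1) * P.comp (X ^ p) := by
  simp [xPowPredMulExpand, expand_eq_comp_X_pow, eq_comm]

theorem X_pow_mem_xPowPredMulExpand {n : ℕ} (h : p ∣ n + 1) : X ^ n ∈ xPowPredMulExpand R p := by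
  obtain ⟨_ | k, hk⟩ := h
  · simp at hk
  refine mem_xPowPredMulExpand.mpr ⟨X ^ k, ?_⟩
  rw [X_pow_comp, ← pow_mul, ← pow_add]
  have hp : 0 < p := Nat.pos_of_ne_zero (by rintro rfl; simp at hk)
  congr 1
  rw [Nat.mul_succ] at hk
  omega

theorem dvd_natDegree_add_one_of_mem_xPowPredMulExpand (hp : 0 < p) {f : R[X]}
    (hf : f ∈ xPowPredMulExpand R p) (hf0 : f ≠ 0) : p ∣ f.natDegree + 1 := by
  obtain ⟨P, rfl⟩ := hf
  have hP : expand R p P ≠ 0 := by rintro h; simp [h] at hf0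
  have : Nontrivial R := nontrivial_iff.mp (nontrivial_of_ne _ _ hP)
  refine ⟨P.natDegree + 1, ?_⟩
  simp only [LinearMap.coe_comp, Function.comp_apply, AlgHom.toLinearMap_apply,
    LinearMap.mulLeft_apply, natDegree_X_pow_mul _ hP, natDegree_expand]
  rw [Nat.mul_succ, mul_comm]
  omega

end CommSemiring

theorem disjoint_xPowPredMulExpand_range_fwdDifference {R : Type*} [CommRing R] [IsDomain R]
    {p : ℕ} [CharP R p] (hp : 0 < p) :
    Disjoint (xPowPredMulExpand R p) (LinearMap.range (fwdDifference R)) := by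
  refine Submodule.disjoint_def.mpr ?_
  rintro _ hV ⟨H, rfl⟩
  by_contra h
  exact natCast_natDegree_fwdDifference_add_one_ne_zero h
    ((CharP.cast_eq_zero_iff R p _).mpr (dvd_natDegree_add_one_of_mem_xPowPredMulExpand hp hV h))

theorem codisjoint_xPowPredMulExpand_range_fwdDifference {K : Type*} [Field K] {p : ℕ}
    [CharP K p] : Codisjoint (xPowPredMulExpand K p) (LinearMap.range (fwdDifference K)) := by
  let S : Sequence K :=
    ⟨fun n ↦ if p ∣ n + 1 then X ^ n else descPochhammer K n, fun n ↦ by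
      split_ifs <;> simp [degree_eq_natDegree (monic_descPochhammer K n).ne_zero]⟩
  rw [codisjoint_iff, eq_top_iff, ← S.span fun n ↦ ?_, Submodule.span_le]
  · rintro _ ⟨n, rfl⟩
    change (if p ∣ n + 1 then X ^ n else descPochhammer K n) ∈ _
    split_ifs with h
    · exact Submodule.mem_sup_left (X_pow_mem_xPowPredMulExpand h)
    refine Submodule.mem_sup_right ⟨((n + 1 : ℕ) : K)⁻¹ • descPochhammer K (n + 1), ?_⟩
    have hn : (n + 1 : K) ≠ 0 := by exact_mod_cast (CharP.cast_eq_zero_iff K p (n + 1)).not.mpr h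
    simp [fwdDifference_descPochhammer, smul_smul, inv_mul_cancel₀ hn]
  · change IsUnit (if p ∣ n + 1 then X ^ n else descPochhammer K n).leadingCoeff
    split_ifs <;> simp [(monic_descPochhammer K n).leadingCoeff]

end Polynomial

theorem stmt_2 (K : Type*) [Field K] (p : ℕ) (hp : 0 < p) (hchar : CharP K p)
    (F : Polynomial K) :
    ∃! GD : Polynomial K × Polynomial K,
      (∃ P : Polynomial K, GD.1 = X ^ (p - 1) * P.comp (X ^ p)) ∧
      (∃ H : Polynomial K, GD.2 = H.comp (X + 1) - H) ∧
      F = GD.1 + GD.2 := by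
  have hcompl : IsCompl (xPowPredMulExpand K p) (LinearMap.range (fwdDifference K)) :=
    ⟨disjoint_xPowPredMulExpand_range_fwdDifference hp,
      codisjoint_xPowPredMulExpand_range_fwdDifference⟩
  obtain ⟨G, D, hGD, huniq⟩ := Submodule.existsUnique_add_of_isCompl hcompl F
  refine ⟨(G, D), ⟨mem_xPowPredMulExpand.mp G.2, mem_range_fwdDifference.mp D.2, hGD.symm⟩, ?_⟩
  rintro ⟨G', D'⟩ ⟨hG', hD', hF⟩
  obtain ⟨hG, hD⟩ := huniq ⟨G', mem_xPowPredMulExpand.mpr hG'⟩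
    ⟨D', mem_range_fwdDifference.mpr hD'⟩ hF.symm
  exact Prod.ext (congrArg Subtype.val hG) (congrArg Subtype.val hD)
end

section
/- Let K be a field of characteristic p > 0, let V = {x^{p-1} P(x^p) : P ∈ K[x]} ⊆ K[x], and let δ : K[x] → K[x] be F(x) ↦ F(x+1) - F(x). Then V + Im(δ) = K[x], i.e., every polynomial F ∈ K[x] can be written as F = G + δ(H) with G ∈ V and H ∈ K[x]. -/
/-!
Both `V` and the image of `δ` are subspaces, so it suffices to reach every monomial `X ^ n`,
by induction on `n`. If `n + 1 = p k` then `X ^ n = X ^ (p - 1) * (X ^ p) ^ (k - 1)` lies in `V`.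
Otherwise `n + 1 ≠ 0` in `K`, and `δ (X ^ (n + 1)) = (n + 1) X ^ n + (terms of degree < n)`
expresses `X ^ n` through the image of `δ` and lower monomials.
-/

open Polynomial

namespace Polynomial

section Semiring

variable {R : Type*} [Semiring R]

theorem eq_top_of_forall_degreeLT_le_imp_X_pow_mem {M : Submodule R R[X]}
    (h : ∀ n, degreeLT R n ≤ M → X ^ n ∈ M) : M = ⊤ := by
  classical
  have hlow : ∀ n, degreeLT R n ≤ M := by
    intro n
    induction n with
    | zero => exact fun f hf => by simp_all [mem_degreeLT]
    | succ n ih =>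
      rw [degreeLT_eq_span_X_pow, Submodule.span_le, Finset.coe_image, Set.image_subset_iff]
      intro i hi
      rcases Nat.lt_succ_iff_lt_or_eq.mp (Finset.mem_range.mp hi) with hi | rfl
      · exact ih (mem_degreeLT.mpr ((degree_X_pow_le i).trans_lt (by exact_mod_cast hi)))
      · exact h i ih
  refine eq_top_iff.mpr fun f _ => hlow (f.natDegree + 1) (mem_degreeLT.mpr ?_)
  exact degree_le_natDegree.trans_lt (by exact_mod_cast Nat.lt_succ_self _)

end Semiring

section CommRing

variable {R : Type*} [CommRing R]

theorem X_add_one_pow_succ_sub_X_pow_succ_sub_mem_degreeLT (n : ℕ) :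
    (X + 1 : R[X]) ^ (n + 1) - X ^ (n + 1) - C ((n : R) + 1) * X ^ n ∈ degreeLT R n := by
  rw [mem_degreeLT, degree_lt_iff_coeff_zero]
  intro m hm
  simp only [coeff_sub, coeff_X_add_one_pow, coeff_X_pow, coeff_C_mul]
  rcases Nat.lt_or_ge m (n + 1) with h | h
  · obtain rfl : m = n := by omega
    simp [Nat.choose_succ_self_right]
  · rcases h.lt_or_eq with h | rfl
    · simp [Nat.choose_eq_zero_of_lt h, h.ne', (show m ≠ n by omega)]
    · simp

variable (R) in
/-- The operator `δ`. -/
noncomputable def shiftDiff : R[X] →ₗ[R] R[X] := taylor 1 - LinearMap.id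

theorem shiftDiff_apply (H : R[X]) : shiftDiff R H = H.comp (X + 1) - H := by
  simp [shiftDiff, taylor_apply]

theorem shiftDiff_X_pow_succ_sub_C_mul_X_pow_mem_degreeLT (n : ℕ) :
    shiftDiff R (X ^ (n + 1)) - C ((n : R) + 1) * X ^ n ∈ degreeLT R n := by
  simpa [shiftDiff_apply] using X_add_one_pow_succ_sub_X_pow_succ_sub_mem_degreeLT (R := R) n

end CommRing

section CommSemiring

variable {R : Type*} [CommSemiring R]

variable (R) in
/-- The range of this map is the space `V`. -/
noncomputable def mulXPowPredExpand (p : ℕ) : R[X] →ₗ[R] R[X] :=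
  LinearMap.mulLeft R (X ^ (p - 1)) ∘ₗ (expand R p).toLinearMap

theorem mulXPowPredExpand_apply (p : ℕ) (P : R[X]) :
    mulXPowPredExpand R p P = X ^ (p - 1) * P.comp (X ^ p) := rfl

theorem X_pow_mem_range_mulXPowPredExpand {p n : ℕ} (h : p ∣ n + 1) :
    X ^ n ∈ LinearMap.range (mulXPowPredExpand R p) := by
  obtain ⟨k, hk⟩ := h
  obtain ⟨j, rfl⟩ : ∃ j, k = j + 1 := Nat.exists_eq_succ_of_ne_zero (by rintro rfl; omega)
  have hp : p ≠ 0 := by rintro rfl; simp at hk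
  have hexp : p - 1 + p * j = n := by rw [mul_add_one] at hk; omega
  exact ⟨X ^ j, by rw [mulXPowPredExpand_apply, X_pow_comp, ← pow_mul, ← pow_add, hexp]⟩

end CommSemiring

theorem range_mulXPowPredExpand_sup_range_shiftDiff {K : Type*} [Field K] (p : ℕ) [CharP K p] :
    LinearMap.range (mulXPowPredExpand K p) ⊔ LinearMap.range (shiftDiff K) = ⊤ := by
  refine eq_top_of_forall_degreeLT_le_imp_X_pow_mem fun n hlow => ?_
  by_cases hdvd : p ∣ n + 1
  · exact Submodule.mem_sup_left (X_pow_mem_range_mulXPowPredExpand hdvd)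
  have hn : (n : K) + 1 ≠ 0 := by
    exact_mod_cast (CharP.cast_eq_zero_iff K p (n + 1)).not.mpr hdvd
  have hXn : (X : K[X]) ^ n = ((n : K) + 1)⁻¹ • shiftDiff K (X ^ (n + 1))
      - ((n : K) + 1)⁻¹ • (shiftDiff K (X ^ (n + 1)) - C ((n : K) + 1) * X ^ n) := by
    rw [← smul_sub, sub_sub_cancel, smul_eq_C_mul, ← mul_assoc, ← C_mul, inv_mul_cancel₀ hn,
      C_1, one_mul]
  rw [hXn]
  exact sub_mem (Submodule.smul_mem _ _ (Submodule.mem_sup_right (LinearMap.mem_range_self _ _)))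
    (Submodule.smul_mem _ _ (hlow (shiftDiff_X_pow_succ_sub_C_mul_X_pow_mem_degreeLT n)))

end Polynomial

theorem stmt_3_general (K : Type*) [Field K] (p : ℕ) (hchar : CharP K p)
    (F : Polynomial K) :
    ∃ (P H : Polynomial K),
      F = X ^ (p - 1) * P.comp (X ^ p) + (H.comp (X + 1) - H) := by
  have hF : F ∈ LinearMap.range (mulXPowPredExpand K p) ⊔ LinearMap.range (shiftDiff K) := by
    rw [range_mulXPowPredExpand_sup_range_shiftDiff]
    exact Submodule.mem_top
  obtain ⟨_, ⟨P, rfl⟩, _, ⟨H, rfl⟩, hsum⟩ := Submodule.mem_sup.mp hF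
  exact ⟨P, H, by rw [← hsum, mulXPowPredExpand_apply, shiftDiff_apply]⟩

theorem stmt_3 (K : Type*) [Field K] (p : ℕ) (hp : 0 < p) (hchar : CharP K p)
    (F : Polynomial K) :
    ∃ (P H : Polynomial K),
      F = X ^ (p - 1) * P.comp (X ^ p) + (H.comp (X + 1) - H) :=
  stmt_3_general K p hchar F
end

section
/- Let K be a field of characteristic p > 0 and P ∈ K[x₂]. The automorphism f of the affine plane given by f(x₁, x₂) = (x₁ + x₂^{p-1} P(x₂^p), x₂ + 1) has order p (i.e., f^p = id) if and only if P = 0. -/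
/-! The `n`-th power of `(x₀, x₁) ↦ (x₀ + F(x₁), x₁ + 1)` is `(x₀ + ∑_{k<n} F(x₁ + k), x₁ + n)`,
so in characteristic `p` the `p`-th power is the identity exactly when `N(F) = ∑_{k<p} F(x + k)`
vanishes. For `F = x^{p-1} P(x^p)` Frobenius gives `F(x + k) = (x + k)^{p-1} P(x^p + k)`, and
only the constant term `k^{p-1}` of `(x + k)^{p-1}` reaches degree `p · deg P`; hence the
coefficient of `N(F)` in that degree is `(∑_{k<p} k^{p-1}) · lc P = -lc P` by Fermat. -/

section CharP

variable {R : Type*} [Ring R] {p : ℕ} [Fact p.Prime] [CharP R p]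

theorem natCast_pow_char_eq_self (k : ℕ) : (k : R) ^ p = k := by
  simpa only [map_pow, map_natCast] using
    congrArg (ZMod.castHom (dvd_refl p) R) (ZMod.pow_card (k : ZMod p))

theorem natCast_pow_char_sub_one_eq_one {k : ℕ} (hk : ¬ p ∣ k) : (k : R) ^ (p - 1) = 1 := by
  have hk' : (k : ZMod p) ≠ 0 := by rwa [Ne, ZMod.natCast_eq_zero_iff]
  simpa only [map_pow, map_natCast, map_one] using
    congrArg (ZMod.castHom (dvd_refl p) R) (ZMod.pow_card_sub_one_eq_one hk')

theorem sum_range_natCast_pow_char_sub_one : ∑ k ∈ Finset.range p, (k : R) ^ (p - 1) = -1 := by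
  have hp := (Fact.out : p.Prime)
  have hterm : ∀ k ∈ Finset.range p, (k : R) ^ (p - 1) = 1 - if k = 0 then 1 else 0 := by
    intro k hk
    rcases eq_or_ne k 0 with rfl | hk0
    · simp [zero_pow (Nat.sub_ne_zero_of_lt hp.one_lt)]
    · rw [natCast_pow_char_sub_one_eq_one, if_neg hk0, sub_zero]
      exact fun hdvd => hk0 (Nat.eq_zero_of_dvd_of_lt hdvd (Finset.mem_range.mp hk))
  rw [Finset.sum_congr rfl hterm, Finset.sum_sub_distrib, Finset.sum_ite_eq',
    if_pos (Finset.mem_range.mpr hp.pos)]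
  simp [CharP.cast_eq_zero]

end CharP

namespace Polynomial

theorem coeff_mul_expand_mul_of_natDegree_lt {R : Type*} [CommSemiring R] {p : ℕ} (hp : 0 < p)
    {q : R[X]} (hq : q.natDegree < p) (Q : R[X]) (n : ℕ) :
    (q * expand R p Q).coeff (p * n) = q.coeff 0 * Q.coeff n := by
  rw [coeff_mul, Finset.sum_eq_single (0, p * n)]
  · rw [coeff_expand hp, if_pos (dvd_mul_right p n), Nat.mul_div_cancel_left n hp]
  · rintro ⟨i, j⟩ hij hne
    rw [Finset.HasAntidiagonal.mem_antidiagonal] at hij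
    by_cases hj : p ∣ j
    · have hi : p ∣ i := (Nat.dvd_add_left hj).mp (hij ▸ dvd_mul_right p n)
      have hi0 : i ≠ 0 := by
        rintro rfl
        exact hne (by simp_all)
      rw [coeff_eq_zero_of_natDegree_lt (hq.trans_le (Nat.le_of_dvd (Nat.pos_of_ne_zero hi0) hi)),
        zero_mul]
    · rw [coeff_expand hp, if_neg hj, mul_zero]
  · simp

variable {R : Type*} [CommRing R]

noncomputable def shiftSum (n : ℕ) (F : R[X]) : R[X] :=
  ∑ k ∈ Finset.range n, taylor (k : R) F

theorem shiftSum_succ (n : ℕ) (F : R[X]) :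
    shiftSum (n + 1) F = shiftSum n F + taylor (n : R) F :=
  Finset.sum_range_succ _ n

theorem aeval_taylor {A : Type*} [CommRing A] [Algebra R A] (x : A) (r : R) (F : R[X]) :
    aeval x (taylor r F) = aeval (x + algebraMap R A r) F := by
  rw [taylor_apply, aeval_comp, map_add, aeval_X, aeval_C]

variable {p : ℕ} [Fact p.Prime] [CharP R p]

theorem taylor_natCast_expand (k : ℕ) (P : R[X]) :
    taylor (k : R) (expand R p P) = expand R p (taylor (k : R) P) := by
  have hfrob : (X + C (k : R)) ^ p = X ^ p + C (k : R) := by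
    rw [add_pow_char, ← C_pow, natCast_pow_char_eq_self]
  rw [taylor_apply, taylor_apply, expand_eq_comp_X_pow, expand_eq_comp_X_pow, comp_assoc,
    comp_assoc, X_pow_comp, hfrob, add_comp, X_comp, C_comp]

theorem coeff_shiftSum_X_pow_mul_expand (P : R[X]) :
    (shiftSum p (X ^ (p - 1) * expand R p P)).coeff (p * P.natDegree) = -P.leadingCoeff := by
  have hp := (Fact.out : p.Prime)
  have hterm : ∀ k : ℕ, (taylor (k : R) (X ^ (p - 1) * expand R p P)).coeff (p * P.natDegree)
      = (k : R) ^ (p - 1) * P.leadingCoeff := by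
    intro k
    rw [taylor_mul, taylor_natCast_expand, coeff_mul_expand_mul_of_natDegree_lt hp.pos,
      taylor_coeff_zero, eval_pow, eval_X, ← natDegree_taylor P (k : R), coeff_natDegree,
      leadingCoeff_taylor]
    rw [natDegree_taylor]
    exact (natDegree_X_pow_le _).trans_lt (Nat.sub_lt hp.pos one_pos)
  simp only [shiftSum, finsetSum_coeff, hterm, ← Finset.sum_mul,
    sum_range_natCast_pow_char_sub_one, neg_one_mul]

theorem shiftSum_X_pow_mul_expand_eq_zero_iff (P : R[X]) :
    shiftSum p (X ^ (p - 1) * expand R p P) = 0 ↔ P = 0 := by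
  refine ⟨fun h => ?_, fun h => by simp [h, shiftSum]⟩
  have := coeff_shiftSum_X_pow_mul_expand P
  rwa [h, coeff_zero, eq_comm, neg_eq_zero, leadingCoeff_eq_zero] at this

end Polynomial

namespace MvPolynomial

variable {R : Type*} [CommRing R]

theorem polynomial_aeval_X_injective {σ : Type*} (i : σ) :
    Function.Injective (Polynomial.aeval (R := R) (X i : MvPolynomial σ R)) :=
  Function.LeftInverse.injective (g := aeval (R := R) fun _ => Polynomial.X) fun q => by
    rw [← Polynomial.aeval_algHom_apply, aeval_X, Polynomial.aeval_X_left_apply]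

/-- The action of `(x₀, x₁) ↦ (x₀ + F(x₁), x₁ + 1)` on coordinate tuples by substitution, so that
`(triangularSubst F)^[n] X` are the coordinates of its `n`-th power. -/
noncomputable def triangularSubst (F : Polynomial R) (g : Fin 2 → MvPolynomial (Fin 2) R) :
    Fin 2 → MvPolynomial (Fin 2) R :=
  fun i => bind₁ g (![X 0 + Polynomial.aeval (X 1) F, X 1 + 1] i)

theorem triangularSubst_iterate (F : Polynomial R) (n : ℕ) :
    (triangularSubst F)^[n] X =
      ![X 0 + Polynomial.aeval (X 1) (Polynomial.shiftSum n F),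
        X 1 + (n : MvPolynomial (Fin 2) R)] := by
  induction n with
  | zero => funext i; fin_cases i <;> simp [Polynomial.shiftSum]
  | succ n ih =>
    rw [Function.iterate_succ_apply', ih]
    funext i
    fin_cases i
    · simp [triangularSubst, ← Polynomial.aeval_algHom_apply, Polynomial.shiftSum_succ,
        Polynomial.aeval_taylor, add_assoc]
    · simp [triangularSubst, add_assoc]

theorem triangularSubst_iterate_char_eq_X_iff {p : ℕ} [CharP R p] (F : Polynomial R) :
    (triangularSubst F)^[p] X = X ↔ Polynomial.shiftSum p F = 0 := by
  rw [triangularSubst_iterate, CharP.cast_eq_zero, add_zero,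
    ← (polynomial_aeval_X_injective (R := R) (σ := Fin 2) 1).eq_iff, map_zero]
  constructor
  · intro h
    simpa using congrFun h 0
  · intro h
    funext i
    fin_cases i <;> simp [h]

end MvPolynomial

open MvPolynomial

theorem stmt_5 (K : Type*) [Field K] (p : ℕ) (hp : 0 < p) (hchar : CharP K p)
    (P : Polynomial K) :
    (fun g : Fin 2 → MvPolynomial (Fin 2) K => fun i =>
        MvPolynomial.bind₁ g
          (![MvPolynomial.X 0 +
               MvPolynomial.X 1 ^ (p - 1) * Polynomial.aeval (MvPolynomial.X 1 ^ p) P,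
             MvPolynomial.X 1 + 1] i))^[p] (fun i => MvPolynomial.X i)
      = (fun i => MvPolynomial.X i) ↔ P = 0 := by
  have : Fact p.Prime := ⟨CharP.char_prime_of_ne_zero K hp.ne'⟩
  have hF : Polynomial.aeval (X 1 : MvPolynomial (Fin 2) K)
      (Polynomial.X ^ (p - 1) * Polynomial.expand K p P) =
        X 1 ^ (p - 1) * Polynomial.aeval (X 1 ^ p) P := by
    simp [Polynomial.expand_aeval]
  rw [← hF]
  exact (triangularSubst_iterate_char_eq_X_iff _).trans
    (Polynomial.shiftSum_X_pow_mul_expand_eq_zero_iff P)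
end

section
/- Let k be a field, and let f, g be polynomial automorphisms of A²_k of degree ≥ 2, regarded via their extensions as birational maps of P²_k. If the unique indeterminacy point I_g of g is different from the point X_f onto which f contracts the line at infinity, then deg(g∘f) = deg(g)·deg(f). -/
open MvPolynomial

/-- Composition of polynomial endomorphisms of affine `n`-space:
`(mvComp g f) i = g_i (f₁, …, f_n)`. -/
noncomputable def mvComp {k : Type*} [CommSemiring k] {n : ℕ}
    (g f : Fin n → MvPolynomial (Fin n) k) : Fin n → MvPolynomial (Fin n) k :=
  fun i => MvPolynomial.bind₁ f (g i)

/-- The degree of a polynomial endomorphism of affine `n`-space. -/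
noncomputable def mvDeg {k : Type*} [CommSemiring k] {n : ℕ}
    (f : Fin n → MvPolynomial (Fin n) k) : ℕ :=
  Finset.univ.sup fun i => (f i).totalDegree

/-- The highest homogeneous part of a polynomial endomorphism. -/
noncomputable def topPart {k : Type*} [CommSemiring k] {n : ℕ}
    (f : Fin n → MvPolynomial (Fin n) k) : Fin n → MvPolynomial (Fin n) k :=
  fun i => MvPolynomial.homogeneousComponent (mvDeg f) (f i)

/-!
With `d = deg f`, `e = deg g` and `F`, `G` the top homogeneous parts, every component of `g ∘ f`
has degree at most `e * d`, and its part of degree `e * d` is `G_i(F)`. So the degree drops only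
if `G(F) = 0`. In that case the ratio `F₀ / F₁` in the fraction field is a root of the
dehomogenization of a nonzero binary form `G_i`, hence a constant since `k` is algebraically
closed: `F = q • u` with `u ∈ k²` and `q ≠ 0`. Then `G(u) = 0`, so `[u] = I_g`, while
`F(w) = q(w) • u` at any `w` with `q(w) ≠ 0`, so `X_f = [u]` as well.
-/

namespace MvPolynomial

theorem aeval_smul_of_isHomogeneous {R S σ : Type*} [CommSemiring R] [CommSemiring S]
    [Algebra R S] {G : MvPolynomial σ R} {n : ℕ} (hG : G.IsHomogeneous n) (r : S) (x : σ → S) :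
    aeval (r • x) G = r ^ n * aeval x G := by
  rw [G.as_sum, map_sum, map_sum, Finset.mul_sum]
  refine Finset.sum_congr rfl fun s hs => ?_
  have hdeg : ∑ i ∈ s.support, s i = n := by
    rw [← hG (mem_support_iff.mp hs), Finsupp.weight_apply]; simp [Finsupp.sum]
  simp only [aeval_monomial, Pi.smul_apply, smul_eq_mul, mul_pow, Finsupp.prod_mul]
  rw [Finsupp.prod, Finset.prod_pow_eq_pow_sum, hdeg]
  ring

section TopPart

variable {R σ τ : Type*} [CommRing R]

-- Phrased through the support: `(p - P).totalDegree < n` would exclude `p = P` when `n = 0`.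
structure IsTopPart (n : ℕ) (P p : MvPolynomial σ R) : Prop where
  isHomogeneous : P.IsHomogeneous n
  degree_lt : ∀ s ∈ (p - P).support, s.degree < n

theorem degree_lt_of_mem_support_mul {m n : ℕ} {a b : MvPolynomial σ R}
    (ha : ∀ s ∈ a.support, s.degree < m) (hb : b.totalDegree ≤ n) :
    ∀ s ∈ (a * b).support, s.degree < m + n := by
  classical
  intro s hs
  obtain ⟨x, hx, y, hy, rfl⟩ := Finset.mem_add.mp (support_mul a b hs)
  rw [map_add]
  exact Nat.add_lt_add_of_lt_of_le (ha x hx) ((le_totalDegree hy).trans hb)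

theorem isTopPart_homogeneousComponent {n : ℕ} {p : MvPolynomial σ R}
    (hp : p.totalDegree ≤ n) : IsTopPart n (homogeneousComponent n p) p := by
  refine ⟨homogeneousComponent_isHomogeneous n p, fun s hs => ?_⟩
  rw [mem_support_iff, coeff_sub, coeff_homogeneousComponent] at hs
  split_ifs at hs with hsn
  · exact absurd (sub_self _) hs
  · rw [sub_zero] at hs
    exact lt_of_le_of_ne ((le_totalDegree (mem_support_iff.mpr hs)).trans hp) hsn

namespace IsTopPart

variable {m n : ℕ} {P p Q q : MvPolynomial σ R}

theorem totalDegree_le (h : IsTopPart n P p) : p.totalDegree ≤ n := by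
  rw [← sub_add_cancel p P]
  exact (totalDegree_add _ _).trans
    (max_le (Finset.sup_le fun s hs => (h.degree_lt s hs).le) h.isHomogeneous.totalDegree_le)

theorem homogeneousComponent_eq (h : IsTopPart n P p) : homogeneousComponent n p = P := by
  ext s
  rw [coeff_homogeneousComponent]
  split_ifs with hs
  · rw [← sub_eq_zero, ← coeff_sub, ← notMem_support_iff]
    exact fun hmem => (h.degree_lt s hmem).ne hs
  · exact (h.isHomogeneous.coeff_eq_zero hs).symm

theorem totalDegree_eq (h : IsTopPart n P p) (hP : P ≠ 0) : p.totalDegree = n :=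
  le_antisymm h.totalDegree_le <| not_lt.mp fun hlt => hP <| by
    rw [← h.homogeneousComponent_eq, homogeneousComponent_eq_zero _ _ hlt]

theorem totalDegree_lt (h : IsTopPart n 0 p) (hn : 0 < n) : p.totalDegree < n :=
  (Finset.sup_lt_iff hn).mpr fun s hs => h.degree_lt s (by rwa [sub_zero])

theorem zero_of_lt (h : IsTopPart m P p) (hmn : m < n) : IsTopPart n 0 p where
  isHomogeneous := isHomogeneous_zero _ _ _
  degree_lt s hs := by
    rw [sub_zero] at hs
    exact ((le_totalDegree hs).trans h.totalDegree_le).trans_lt hmn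

theorem zero : IsTopPart n (0 : MvPolynomial σ R) 0 :=
  ⟨isHomogeneous_zero _ _ _, by simp⟩

theorem one : IsTopPart 0 (1 : MvPolynomial σ R) 1 :=
  ⟨isHomogeneous_one _ _, by simp⟩

theorem add (hp : IsTopPart n P p) (hq : IsTopPart n Q q) : IsTopPart n (P + Q) (p + q) := by
  classical
  refine ⟨hp.isHomogeneous.add hq.isHomogeneous, fun s hs => ?_⟩
  rw [add_sub_add_comm] at hs
  rcases Finset.mem_union.mp (support_add hs) with hs | hs
  exacts [hp.degree_lt s hs, hq.degree_lt s hs]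

theorem mul (hp : IsTopPart m P p) (hq : IsTopPart n Q q) :
    IsTopPart (m + n) (P * Q) (p * q) := by
  classical
  refine ⟨hp.isHomogeneous.mul hq.isHomogeneous, fun s hs => ?_⟩
  rw [show p * q - P * Q = (p - P) * q + (q - Q) * P by ring] at hs
  rcases Finset.mem_union.mp (support_add hs) with hs | hs
  · exact degree_lt_of_mem_support_mul hp.degree_lt hq.totalDegree_le s hs
  · rw [add_comm]
    exact degree_lt_of_mem_support_mul hq.degree_lt hp.isHomogeneous.totalDegree_le s hs

theorem C_mul (h : IsTopPart n P p) (c : R) : IsTopPart n (C c * P) (C c * p) := by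
  simpa using (IsTopPart.mk (isHomogeneous_C σ c) (by simp)).mul h

theorem pow (h : IsTopPart n P p) (a : ℕ) : IsTopPart (n * a) (P ^ a) (p ^ a) := by
  induction a with
  | zero => simpa using one
  | succ a ih => simpa only [pow_succ, Nat.mul_succ] using ih.mul h

theorem sum {ι : Type*} (s : Finset ι) {P p : ι → MvPolynomial σ R}
    (h : ∀ i ∈ s, IsTopPart n (P i) (p i)) : IsTopPart n (∑ i ∈ s, P i) (∑ i ∈ s, p i) := by
  induction s using Finset.cons_induction with
  | empty => simpa using zero
  | cons i s hi ih =>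
    rw [Finset.forall_mem_cons] at h
    simpa only [Finset.sum_cons] using h.1.add (ih h.2)

theorem prod {ι : Type*} (s : Finset ι) {P p : ι → MvPolynomial σ R} {n : ι → ℕ}
    (h : ∀ i ∈ s, IsTopPart (n i) (P i) (p i)) :
    IsTopPart (∑ i ∈ s, n i) (∏ i ∈ s, P i) (∏ i ∈ s, p i) := by
  induction s using Finset.cons_induction with
  | empty => simpa using one
  | cons i s hi ih =>
    rw [Finset.forall_mem_cons] at h
    simpa only [Finset.sum_cons, Finset.prod_cons] using h.1.mul (ih h.2)

variable {d : ℕ} {F f : τ → MvPolynomial σ R}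

theorem bind₁_monomial (hFf : ∀ j, IsTopPart d (F j) (f j)) (s : τ →₀ ℕ) (c : R) :
    IsTopPart (s.degree * d) (bind₁ F (monomial s c)) (bind₁ f (monomial s c)) := by
  rw [MvPolynomial.bind₁_monomial, MvPolynomial.bind₁_monomial, Finsupp.degree_apply,
    Finset.sum_mul]
  simpa only [mul_comm] using (prod s.support fun i _ => (hFf i).pow (s i)).C_mul c

theorem bind₁ (hd : 0 < d) (hFf : ∀ j, IsTopPart d (F j) (f j)) {G g : MvPolynomial τ R}
    {e : ℕ} (hGg : IsTopPart e G g) : IsTopPart (e * d) (bind₁ F G) (bind₁ f g) := by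
  have hlow : IsTopPart (e * d) 0 (MvPolynomial.bind₁ f (g - G)) := by
    rw [(g - G).as_sum, map_sum]
    simpa only [Finset.sum_const_zero] using sum _ fun s hs =>
      (bind₁_monomial hFf s _).zero_of_lt (Nat.mul_lt_mul_of_pos_right (hGg.degree_lt s hs) hd)
  have htop : IsTopPart (e * d) (MvPolynomial.bind₁ F G) (MvPolynomial.bind₁ f G) := by
    rw [G.as_sum, map_sum, map_sum]
    refine sum _ fun s hs => ?_
    have hdeg : s.degree = e := by
      rw [Finsupp.degree_eq_weight_one]; exact hGg.isHomogeneous (mem_support_iff.mp hs)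
    simpa only [hdeg] using bind₁_monomial hFf s _
  simpa using htop.add hlow

end IsTopPart

end TopPart

section BinaryForm

variable {k R : Type*} [Field k] [CommRing R] [IsDomain R] [Algebra k R]

theorem eval_eq_zero_of_aeval_mul_eq_zero {σ : Type*} {G : MvPolynomial σ k} {e : ℕ}
    (hG : G.IsHomogeneous e) {u : σ → k} {q : R} (hq : q ≠ 0)
    (h : aeval (fun j => algebraMap k R (u j) * q) G = 0) : eval u G = 0 := by
  have hscale : (fun j => algebraMap k R (u j) * q) = q • (algebraMap k R ∘ u) := by
    ext j; simp [mul_comm]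
  rw [hscale, aeval_smul_of_isHomogeneous hG, mul_eq_zero, aeval_algebraMap_eq_zero_iff] at h
  exact h.resolve_left (pow_ne_zero _ hq)

theorem exists_eq_algebraMap_mul_of_aeval_eq_zero [IsAlgClosed k]
    {G : MvPolynomial (Fin 2) k} {e : ℕ} (hG : G.IsHomogeneous e) (hG0 : G ≠ 0)
    {F : Fin 2 → R} (h : aeval F G = 0) :
    ∃ u : Fin 2 → k, u ≠ 0 ∧ ∃ q : R, ∀ j, F j = algebraMap k R (u j) * q := by
  by_cases hF1 : F 1 = 0
  · exact ⟨![1, 0], by simp, F 0, fun j => by fin_cases j <;> simp [hF1]⟩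
  let K := FractionRing R
  have hinj : Function.Injective (algebraMap R K) := IsFractionRing.injective R K
  have hF1K : algebraMap R K (F 1) ≠ 0 := (map_ne_zero_iff _ hinj).mpr hF1
  set t := algebraMap R K (F 0) / algebraMap R K (F 1)
  have hFt : algebraMap R K ∘ F = algebraMap R K (F 1) • ![t, 1] := by
    ext j; fin_cases j <;> simp [t, mul_div_cancel₀ _ hF1K]
  have ht : aeval ![t, 1] G = 0 := by
    rw [← aeval_algebraMap_eq_zero_iff (B := K), hFt, aeval_smul_of_isHomogeneous hG] at h
    exact (mul_eq_zero.mp h).resolve_left (pow_ne_zero _ hF1K)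
  set P : Polynomial k := aeval ![Polynomial.X, 1] G
  have hP0 : P ≠ 0 := fun hP => hG0 <| by
    rw [← Polynomial.homogenize_eq_of_isHomogeneous hG hP, Polynomial.homogenize_zero]
  have hPt : (P.map (algebraMap k K)).IsRoot t := by
    rw [Polynomial.IsRoot, Polynomial.eval_map_algebraMap, comp_aeval_apply]
    convert ht using 2
    ext j; fin_cases j <;> simp
  obtain ⟨r, hr⟩ := (IsAlgClosed.splits P).mem_range_of_isRoot hP0 hPt
  refine ⟨![r, 1], by simp, F 1, fun j => ?_⟩
  fin_cases j
  · apply hinj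
    simp [← IsScalarTower.algebraMap_apply, hr, t, div_mul_cancel₀ _ hF1K]
  · simp

end BinaryForm

end MvPolynomial

section PolynomialMap

variable {k : Type*} [CommRing k] {n : ℕ}

theorem totalDegree_le_mvDeg (f : Fin n → MvPolynomial (Fin n) k) (i : Fin n) :
    (f i).totalDegree ≤ mvDeg f :=
  Finset.le_sup (f := fun i => (f i).totalDegree) (Finset.mem_univ i)

theorem isTopPart_topPart (f : Fin n → MvPolynomial (Fin n) k) (i : Fin n) :
    IsTopPart (mvDeg f) (topPart f i) (f i) :=
  isTopPart_homogeneousComponent (totalDegree_le_mvDeg f i)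

theorem exists_topPart_ne_zero {f : Fin n → MvPolynomial (Fin n) k} (hf : 0 < mvDeg f) :
    ∃ i, topPart f i ≠ 0 := by
  by_contra! h0
  have hlt : mvDeg f < mvDeg f := (Finset.sup_lt_iff hf).mpr fun i _ =>
    (h0 i ▸ isTopPart_topPart f i).totalDegree_lt hf
  exact hlt.false

variable {f g : Fin n → MvPolynomial (Fin n) k}

theorem isTopPart_mvComp (hf : 0 < mvDeg f) (i : Fin n) :
    IsTopPart (mvDeg g * mvDeg f) (bind₁ (topPart f) (topPart g i)) (mvComp g f i) :=
  (isTopPart_topPart g i).bind₁ hf (isTopPart_topPart f)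

theorem mvDeg_mvComp_eq_of_ne_zero (hf : 0 < mvDeg f) {i : Fin n}
    (hi : bind₁ (topPart f) (topPart g i) ≠ 0) : mvDeg (mvComp g f) = mvDeg g * mvDeg f :=
  le_antisymm (Finset.sup_le fun j _ => (isTopPart_mvComp hf j).totalDegree_le)
    ((isTopPart_mvComp hf i).totalDegree_eq hi ▸ totalDegree_le_mvDeg (mvComp g f) i)

end PolynomialMap

theorem stmt_8_general (k : Type*) [Field k] [IsAlgClosed k]
    (f g : Fin 2 → MvPolynomial (Fin 2) k)
    (hdf : 2 ≤ mvDeg f) (hdg : 2 ≤ mvDeg g)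
    -- `I_g ≠ X_f` : no representative of the contraction point of `f`
    -- is proportional to a representative of the indeterminacy point of `g`.
    (hsep : ∀ u w : Fin 2 → k, u ≠ 0 →
      (∀ i, MvPolynomial.eval u (topPart g i) = 0) →
      (∃ i, MvPolynomial.eval w (topPart f i) ≠ 0) →
      ∀ c : k, (fun i => MvPolynomial.eval w (topPart f i)) ≠ c • u) :
    mvDeg (mvComp g f) = mvDeg g * mvDeg f := by
  by_contra hdeg
  have hzero : ∀ i, bind₁ (topPart f) (topPart g i) = 0 := fun i => by
    by_contra hi; exact hdeg (mvDeg_mvComp_eq_of_ne_zero (by omega) hi)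
  obtain ⟨i, hGi⟩ := exists_topPart_ne_zero (f := g) (by omega)
  obtain ⟨u, hu, q, hFq⟩ :=
    exists_eq_algebraMap_mul_of_aeval_eq_zero (homogeneousComponent_isHomogeneous _ _) hGi (hzero i)
  obtain ⟨j, hFj⟩ := exists_topPart_ne_zero (f := f) (by omega)
  have hq : q ≠ 0 := fun hq => hFj (by rw [hFq, hq, mul_zero])
  have hIg : ∀ i, eval u (topPart g i) = 0 := fun i =>
    eval_eq_zero_of_aeval_mul_eq_zero (homogeneousComponent_isHomogeneous _ _) hq
      (funext hFq ▸ hzero i)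
  obtain ⟨w, hw⟩ : ∃ w, eval w q ≠ 0 := by
    by_contra! hw; exact hq (MvPolynomial.funext fun w => by simp [hw])
  have hXf : (fun i => eval w (topPart f i)) = eval w q • u := by
    ext i; simp [hFq, mul_comm]
  obtain ⟨l, hl⟩ := Function.ne_iff.mp hu
  refine hsep u w hu hIg ⟨l, ?_⟩ _ hXf
  rw [congrFun hXf l]
  exact smul_ne_zero hw hl

theorem stmt_8 (k : Type*) [Field k] [IsAlgClosed k]
    (f finv g ginv : Fin 2 → MvPolynomial (Fin 2) k)
    (hf1 : ∀ i, MvPolynomial.bind₁ f (finv i) = MvPolynomial.X i)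
    (hf2 : ∀ i, MvPolynomial.bind₁ finv (f i) = MvPolynomial.X i)
    (hg1 : ∀ i, MvPolynomial.bind₁ g (ginv i) = MvPolynomial.X i)
    (hg2 : ∀ i, MvPolynomial.bind₁ ginv (g i) = MvPolynomial.X i)
    (hdf : 2 ≤ mvDeg f) (hdg : 2 ≤ mvDeg g)
    -- `I_g ≠ X_f` : no representative of the contraction point of `f`
    -- is proportional to a representative of the indeterminacy point of `g`.
    (hsep : ∀ u w : Fin 2 → k, u ≠ 0 →
      (∀ i, MvPolynomial.eval u (topPart g i) = 0) →
      (∃ i, MvPolynomial.eval w (topPart f i) ≠ 0) →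
      ∀ c : k, (fun i => MvPolynomial.eval w (topPart f i)) ≠ c • u) :
    mvDeg (mvComp g f) = mvDeg g * mvDeg f :=
  stmt_8_general k f g hdf hdg hsep
end

section
/- Let k be a field of characteristic 0 and f = (x₁ + x₂², x₂ + x₃², x₃) ∈ SAut(A³_k). Then for every n ≥ 0, f^n = (x₁ + n·x₂² + n(n−1)·x₂·x₃² + (Σ_{i=1}^{n−1} i²)·x₃⁴, x₂ + n·x₃², x₃); in particular deg(f^n) ≤ 4 for all n, and deg(f^n) = 4 for n ≥ 2. -/
/-!
The second coordinate of `f^[n]` is `x₂ + n x₃²` since `x₃` is fixed, so the first coordinate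
gains `(x₂ + n x₃²)² = x₂² + 2n x₂x₃² + n² x₃⁴` at step `n + 1`; summing these increments gives
the closed form. Its `x₃⁴`-coefficient `∑_{i<n} i²` is a positive integer for `n ≥ 2`, hence
nonzero in characteristic zero, which forces total degree exactly `4`.
-/

open MvPolynomial

/-- The automorphism f = (x₁ + x₂², x₂ + x₃², x₃) of A³. -/
noncomputable def f16 (k : Type*) [Field k] : Fin 3 → MvPolynomial (Fin 3) k :=
  ![MvPolynomial.X 0 + MvPolynomial.X 1 ^ 2,
    MvPolynomial.X 1 + MvPolynomial.X 2 ^ 2,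
    MvPolynomial.X 2]

/-- The n-th iterate of f16. -/
noncomputable def iter16 (k : Type*) [Field k] (n : ℕ) :
    Fin 3 → MvPolynomial (Fin 3) k :=
  (fun g i => MvPolynomial.bind₁ g (f16 k i))^[n] (fun i => MvPolynomial.X i)

section

variable {σ R : Type*} [CommSemiring R]

lemma totalDegree_add_le_of_le {p q : MvPolynomial σ R} {d : ℕ} (hp : p.totalDegree ≤ d)
    (hq : q.totalDegree ≤ d) : (p + q).totalDegree ≤ d :=
  (totalDegree_add p q).trans (max_le hp hq)

lemma totalDegree_C_mul_le (a : R) (p : MvPolynomial σ R) :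
    (C a * p).totalDegree ≤ p.totalDegree := by
  rw [C_mul']
  exact totalDegree_smul_le a p

end

section

variable {k : Type*} [Field k]

lemma totalDegree_X_add_C_mul_le (a b c : k) :
    (X 0 + C a * X 1 ^ 2 + C b * X 1 * X 2 ^ 2 + C c * X 2 ^ 4 :
      MvPolynomial (Fin 3) k).totalDegree ≤ 4 := by
  have hC {a : k} {p : MvPolynomial (Fin 3) k} (hp : p.totalDegree ≤ 4) :
      (C a * p).totalDegree ≤ 4 :=
    (totalDegree_C_mul_le a p).trans hp
  rw [mul_assoc (C b)]
  refine totalDegree_add_le_of_le (totalDegree_add_le_of_le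
    (totalDegree_add_le_of_le ?_ (hC ?_)) (hC ?_)) (hC ?_)
  · simp [totalDegree_X]
  · simp [totalDegree_X_pow]
  · exact (totalDegree_mul _ _).trans (by simp [totalDegree_X, totalDegree_X_pow])
  · simp [totalDegree_X_pow]

lemma coeff_X_add_C_mul (a b c : k) :
    coeff (Finsupp.single 2 4)
      (X 0 + C a * X 1 ^ 2 + C b * X 1 * X 2 ^ 2 + C c * X 2 ^ 4 :
        MvPolynomial (Fin 3) k) = c := by
  simp only [coeff_add, mul_assoc, coeff_C_mul, coeff_X, coeff_X_pow, coeff_X_mul']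
  simp [Finsupp.single_eq_single_iff]

lemma iter16_succ (n : ℕ) : iter16 k (n + 1) = fun i => bind₁ (iter16 k n) (f16 k i) :=
  Function.iterate_succ_apply' _ _ _

variable (k) in
lemma iter16_eq (n : ℕ) :
    iter16 k n =
      ![X 0 + C (n : k) * X 1 ^ 2 + C ((n * (n - 1) : ℕ) : k) * X 1 * X 2 ^ 2 +
          C ((∑ i ∈ Finset.range n, i ^ 2 : ℕ) : k) * X 2 ^ 4,
        X 1 + C (n : k) * X 2 ^ 2,
        X 2] := by
  induction n with
  | zero => funext i; fin_cases i <;> simp [iter16]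
  | succ n ih =>
    have hpred : (n + 1) * n = n * (n - 1) + 2 * n := by
      cases n <;> simp; ring
    rw [iter16_succ, ih]
    funext i
    fin_cases i
    · simp [f16, Finset.sum_range_succ, hpred, map_ofNat]
      ring
    · simp [f16]
      ring
    · simp [f16]

lemma totalDegree_iter16_le (n : ℕ) (i : Fin 3) : (iter16 k n i).totalDegree ≤ 4 := by
  rw [iter16_eq]
  fin_cases i
  · exact totalDegree_X_add_C_mul_le _ _ _
  · exact totalDegree_add_le_of_le (by simp [totalDegree_X])
      ((totalDegree_C_mul_le _ _).trans (by simp [totalDegree_X_pow]))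
  · simp [totalDegree_X]

lemma four_le_totalDegree_iter16_zero [CharZero k] {n : ℕ} (hn : 2 ≤ n) :
    4 ≤ (iter16 k n 0).totalDegree := by
  have hsum : 0 < ∑ i ∈ Finset.range n, i ^ 2 :=
    Finset.sum_pos' (fun i _ => Nat.zero_le _) ⟨1, Finset.mem_range.mpr hn, one_pos⟩
  have hmem : Finsupp.single (2 : Fin 3) 4 ∈ (iter16 k n 0).support := by
    rw [mem_support_iff, iter16_eq, Matrix.cons_val_zero, coeff_X_add_C_mul]
    exact_mod_cast hsum.ne'
  simpa using le_totalDegree hmem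

end

theorem stmt_16 (k : Type*) [Field k] [CharZero k] (n : ℕ) :
    iter16 k n =
      ![MvPolynomial.X 0 + MvPolynomial.C (n : k) * MvPolynomial.X 1 ^ 2 +
          MvPolynomial.C ((n * (n - 1) : ℕ) : k) * MvPolynomial.X 1 *
            MvPolynomial.X 2 ^ 2 +
          MvPolynomial.C ((∑ i ∈ Finset.range n, i ^ 2 : ℕ) : k) *
            MvPolynomial.X 2 ^ 4,
        MvPolynomial.X 1 + MvPolynomial.C (n : k) * MvPolynomial.X 2 ^ 2,
        MvPolynomial.X 2] ∧
    (Finset.univ.sup fun i => (iter16 k n i).totalDegree) ≤ 4 ∧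
    (2 ≤ n → (Finset.univ.sup fun i => (iter16 k n i).totalDegree) = 4) := by
  have hle : (Finset.univ.sup fun i => (iter16 k n i).totalDegree) ≤ 4 :=
    Finset.sup_le fun i _ => totalDegree_iter16_le n i
  refine ⟨iter16_eq k n, hle, fun hn => le_antisymm hle ?_⟩
  exact (four_le_totalDegree_iter16_zero hn).trans
    (Finset.le_sup (f := fun i => (iter16 k n i).totalDegree) (Finset.mem_univ 0))
end

section
/- Let K be a field and P, Q ∈ K[x₂], a ∈ K*, b ∈ K. The automorphisms f = (x₁ + P(x₂), x₂) and g = (x₁ + Q(x₂), x₂) of A²_K are conjugate by the Jacobian-1 de Jonquières automorphism h = (a·x₁ + R(x₂), a⁻¹·(x₂ − b)) (for any R ∈ K[x₂]) if and only if Q(x₂) = a·P(a·x₂ + b). -/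
/-!
Conjugating the shear `(x₁ + P(x₂), x₂)` by `h` is a direct computation: the `R`-terms cancel
and the result is again a shear, namely by `a · P(a x₂ + b)`. A shear determines its polynomial,
since `K[x₂] → K[x₁, x₂]` is injective.
-/

open MvPolynomial

namespace Jonquieres

variable {K : Type*}

theorem aeval_X_C_mul_comp {σ : Type*} [CommSemiring K] (i : σ) (a b : K) (S : Polynomial K) :
    Polynomial.aeval (X i : MvPolynomial σ K)
        (Polynomial.C a * S.comp (Polynomial.C a * Polynomial.X + Polynomial.C b)) =
      C a * Polynomial.aeval (C a * X i + C b) S := by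
  simp [Polynomial.aeval_comp, MvPolynomial.algebraMap_eq]

section CommRing

variable [CommRing K]

/-- `comp F G` is the polynomial map `F ∘ G` (substitute `G` into the coordinates of `F`). -/
noncomputable def comp (F G : Fin 2 → MvPolynomial (Fin 2) K) : Fin 2 → MvPolynomial (Fin 2) K :=
  fun i => bind₁ G (F i)

noncomputable def shear (S : Polynomial K) : Fin 2 → MvPolynomial (Fin 2) K :=
  ![X 0 + Polynomial.aeval (X 1) S, X 1]

theorem shear_injective : Function.Injective (shear (K := K)) := fun _ _ h =>
  Polynomial.toMvPolynomial_inj.mp (add_left_cancel (congrFun h 0))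

end CommRing

variable [Field K]

noncomputable def deJonquieres (a b : K) (R : Polynomial K) : Fin 2 → MvPolynomial (Fin 2) K :=
  ![C a * X 0 + Polynomial.aeval (X 1) R, C a⁻¹ * (X 1 - C b)]

noncomputable def deJonquieresInv (a b : K) (R : Polynomial K) : Fin 2 → MvPolynomial (Fin 2) K :=
  ![C a⁻¹ * (X 0 - Polynomial.aeval (C a * X 1 + C b) R), C a * X 1 + C b]

theorem comp_deJonquieres_shear {a : K} (ha : a ≠ 0) (b : K) (R S : Polynomial K) :
    comp (deJonquieres a b R) (comp (shear S) (deJonquieresInv a b R)) =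
      shear (Polynomial.C a * S.comp (Polynomial.C a * Polynomial.X + Polynomial.C b)) := by
  have hC : (C a : MvPolynomial (Fin 2) K) * C a⁻¹ = 1 := by
    rw [← C_mul, mul_inv_cancel₀ ha, C_1]
  unfold comp
  funext i
  fin_cases i
  · simp only [shear, deJonquieres, deJonquieresInv, Fin.zero_eta, Matrix.cons_val_zero]
    rw [aeval_X_C_mul_comp]
    simp only [Matrix.cons_val_zero, Matrix.cons_val_one, map_add, map_mul, bind₁_X_right,
      bind₁_C_right, ← Polynomial.aeval_algHom_apply]
    linear_combination (X 0 - Polynomial.aeval (C a * X 1 + C b) R) * hC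
  · simp only [shear, deJonquieres, deJonquieresInv, Fin.mk_one, Matrix.cons_val_one,
      Matrix.cons_val_zero, map_mul, map_sub, bind₁_X_right, bind₁_C_right]
    linear_combination X 1 * hC

end Jonquieres

open Jonquieres in
theorem stmt_19 (K : Type*) [Field K] (P Q R : Polynomial K) (a : K)
    (ha : a ≠ 0) (b : K) :
    -- h ∘ f ∘ h⁻¹ = g, where h = (a x₁ + R(x₂), a⁻¹ (x₂ - b)),
    -- f = (x₁ + P(x₂), x₂), g = (x₁ + Q(x₂), x₂)
    (∀ i, MvPolynomial.bind₁
        (fun j => MvPolynomial.bind₁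
          -- h⁻¹ = (a⁻¹ (x₁ - R(a x₂ + b)), a x₂ + b)
          (![MvPolynomial.C a⁻¹ *
               (MvPolynomial.X 0 -
                 Polynomial.aeval
                   (MvPolynomial.C a * MvPolynomial.X 1 + MvPolynomial.C b) R),
             MvPolynomial.C a * MvPolynomial.X 1 + MvPolynomial.C b] :
              Fin 2 → MvPolynomial (Fin 2) K)
          (![MvPolynomial.X 0 + Polynomial.aeval (MvPolynomial.X 1) P,
             MvPolynomial.X 1] j))
        (![MvPolynomial.C a * MvPolynomial.X 0 +
             Polynomial.aeval (MvPolynomial.X 1) R,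
           MvPolynomial.C a⁻¹ * (MvPolynomial.X 1 - MvPolynomial.C b)] i)
      = (![MvPolynomial.X 0 + Polynomial.aeval (MvPolynomial.X 1) Q,
           MvPolynomial.X 1] : Fin 2 → MvPolynomial (Fin 2) K) i)
    ↔ Q = Polynomial.C a *
        P.comp (Polynomial.C a * Polynomial.X + Polynomial.C b) := by
  change (∀ i, comp (deJonquieres a b R) (comp (shear P) (deJonquieresInv a b R)) i = shear Q i) ↔ _
  rw [← funext_iff, comp_deJonquieres_shear ha, shear_injective.eq_iff, eq_comm]
end
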